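/- The set of avoiders of [n] is closed under each of the three symmetries reverse∘complement, reverse∘inverse, and complement∘inverse; that is, if π is an avoider of [n], then so are r(c(π)), r(i(π)), and c(i(π)), where r denotes reverse, c denotes complement, and i denotes inverse. -/

import Mathlib

/-
Common definitions: permutations of {1,…,n} as words (lists), dashed
pattern avoidance, permutation statistics, and β(1,0)-trees with their
statistics, following the paper
"Decompositions and statistics for β(1,0)-trees and nonseparable permutations".
-/

namespace Beta10

attribute [local instance] Classical.propDecidable

/-- `l` is a permutation of `{1, …, n}` (written as a word). -/
def IsPermOf (n : ℕ) (l : List ℕ) : Prop := l.Perm (List.range' 1 n)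

/-- an occurrence of the dashed pattern 3-1-4-2 at positions `i < j < k < m` -/
def occ3142 (l : List ℕ) (i j k m : ℕ) : Prop :=
  i < j ∧ j < k ∧ k < m ∧ m < l.length ∧
  l.getD j 0 < l.getD m 0 ∧ l.getD m 0 < l.getD i 0 ∧ l.getD i 0 < l.getD k 0

def pat3142 (l : List ℕ) : Prop := ∃ i j k m, occ3142 l i j k m

/-- an occurrence of the dashed pattern 2-41-3 at positions `i < j, j+1 < k` -/
def occ2413 (l : List ℕ) (i j k : ℕ) : Prop :=
  i < j ∧ j + 1 < k ∧ k < l.length ∧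
  l.getD (j+1) 0 < l.getD i 0 ∧ l.getD i 0 < l.getD k 0 ∧ l.getD k 0 < l.getD j 0

def pat2413 (l : List ℕ) : Prop := ∃ i j k, occ2413 l i j k

/-- an *avoider*: a permutation of `{1,…,n}` avoiding 3-1-4-2 and 2-41-3 -/
def Avoider (n : ℕ) (l : List ℕ) : Prop := IsPermOf n l ∧ ¬ pat3142 l ∧ ¬ pat2413 l

/-- direct sum of permutations -/
def dsum (σ τ : List ℕ) : List ℕ := σ ++ τ.map (· + σ.length)

/-- a nonempty permutation that is not a direct sum of two nonempty permutations -/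
def Indecomposable (l : List ℕ) : Prop :=
  l ≠ [] ∧ ¬ ∃ σ τ : List ℕ, σ ≠ [] ∧ τ ≠ [] ∧ l = dsum σ τ

/-- position `p` holds a left-to-right maximum of `l` -/
def IsLRMax (l : List ℕ) (p : ℕ) : Prop :=
  p < l.length ∧ ∀ j < p, l.getD j 0 < l.getD p 0

/-- position `p` holds a left-to-right minimum of `l` -/
def IsLRMin (l : List ℕ) (p : ℕ) : Prop :=
  p < l.length ∧ ∀ j < p, l.getD p 0 < l.getD j 0

/-- position `p` holds a right-to-left maximum of `l` -/
def IsRLMax (l : List ℕ) (p : ℕ) : Prop :=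
  p < l.length ∧ ∀ j < l.length, p < j → l.getD j 0 < l.getD p 0

/-- the number of left-to-right maxima -/
noncomputable def lmax (l : List ℕ) : ℕ :=
  ((Finset.range l.length).filter (fun p => IsLRMax l p)).card

/-- the number of left-to-right minima -/
noncomputable def lmin (l : List ℕ) : ℕ :=
  ((Finset.range l.length).filter (fun p => IsLRMin l p)).card

/-- the number of right-to-left maxima -/
noncomputable def rmax (l : List ℕ) : ℕ :=
  ((Finset.range l.length).filter (fun p => IsRLMax l p)).card

/-- the number of ascents -/
noncomputable def asc (l : List ℕ) : ℕ :=
  ((Finset.range (l.length - 1)).filter (fun p => l.getD p 0 < l.getD (p+1) 0)).card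

/-- the number of descents -/
noncomputable def des (l : List ℕ) : ℕ :=
  ((Finset.range (l.length - 1)).filter (fun p => l.getD (p+1) 0 < l.getD p 0)).card

/-- `ldr l` : the largest `i` with `a₁ > a₂ > ⋯ > aᵢ` (and `0` for the empty word) -/
noncomputable def ldr (l : List ℕ) : ℕ :=
  ((Finset.range (l.length + 1)).filter
    (fun i => ∀ j, j + 1 < i → l.getD (j+1) 0 < l.getD j 0)).sup id

/-- `lir l` : the largest `i` with `a₁ < a₂ < ⋯ < aᵢ` (and `0` for the empty word) -/
noncomputable def lir (l : List ℕ) : ℕ :=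
  ((Finset.range (l.length + 1)).filter
    (fun i => ∀ j, j + 1 < i → l.getD j 0 < l.getD (j+1) 0)).sup id

/-- the factor of `l` occupying positions `p, …, q-1` is a component of `l`:
it is nonempty, all letters before it are smaller, all letters after it are
larger, and it admits no nontrivial splitting `αβ` with `α ≺ β`. -/
def IsComponent (l : List ℕ) (p q : ℕ) : Prop :=
  p < q ∧ q ≤ l.length ∧
  (∀ i < p, ∀ j, p ≤ j → j < q → l.getD i 0 < l.getD j 0) ∧
  (∀ j, p ≤ j → j < q → ∀ i, q ≤ i → i < l.length → l.getD j 0 < l.getD i 0) ∧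
  ¬ ∃ r, p < r ∧ r < q ∧ ∀ i, p ≤ i → i < r → ∀ j, r ≤ j → j < q → l.getD i 0 < l.getD j 0

/-- the number of components of `l` -/
noncomputable def comp (l : List ℕ) : ℕ :=
  (((Finset.range (l.length + 1)) ×ˢ (Finset.range (l.length + 1))).filter
    (fun pq => IsComponent l pq.1 pq.2)).card

/-- insert the letter `a` into `l` so that it occupies (0-based) position `r` -/
def insertAt (l : List ℕ) (r : ℕ) (a : ℕ) : List ℕ := l.take r ++ a :: l.drop r

/-- the (0-based) positions of the left-to-right maxima, from left to right -/
noncomputable def lrMaxPos (l : List ℕ) : List ℕ :=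
  (List.range l.length).filter (fun p => decide (IsLRMax l p))

/-- the finite set of avoiders of `{1,…,n}` -/
noncomputable def avoidersFinset (n : ℕ) : Finset (List ℕ) :=
  ((List.range' 1 n).permutations.toFinset).filter (fun l => ¬ pat3142 l ∧ ¬ pat2413 l)

/-- reverse of a permutation -/
def revP (l : List ℕ) : List ℕ := l.reverse

/-- complement of a permutation of `{1,…,n}` -/
def complP (n : ℕ) (l : List ℕ) : List ℕ := l.map (fun a => n + 1 - a)

/-- inverse of a permutation of `{1,…,n}` (as a word: the `v`-th letter is the
position of the letter `v` in `l`, 1-based) -/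
def invP (l : List ℕ) : List ℕ :=
  (List.range' 1 l.length).map (fun v => l.idxOf v + 1)

/-- rooted plane trees with nodes labeled by natural numbers -/
inductive PTree : Type where
  | node : ℕ → List PTree → PTree

namespace PTree

/-- the label of the root -/
def label : PTree → ℕ | node l _ => l

/-- the list of subtrees of the root -/
def children : PTree → List PTree | node _ cs => cs

/-- the number of nodes -/
def size : PTree → ℕ
  | node _ cs => 1 + (cs.attach.map (fun x => size x.1)).sum
decreasing_by have := List.sizeOf_lt_of_mem x.2; simp at this ⊢; omega

/-- the number of leaves -/
def leaves : PTree → ℕ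
  | node _ [] => 1
  | node _ (c :: cs) => ((c :: cs).attach.map (fun x => leaves x.1)).sum
decreasing_by have := List.sizeOf_lt_of_mem x.2; simp at this ⊢; omega

/-- the number of internal (non-leaf) nodes; the root counts as internal -/
def internalN : PTree → ℕ
  | node _ [] => 0
  | node _ (c :: cs) => 1 + ((c :: cs).attach.map (fun x => internalN x.1)).sum
decreasing_by have := List.sizeOf_lt_of_mem x.2; simp at this ⊢; omega

/-- the number of children of the root -/
def subT (t : PTree) : ℕ := t.children.length

/-- the number of edges on the path from the root to the leftmost leaf -/
def lpath : PTree → ℕ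
  | node _ [] => 0
  | node _ (c :: _) => lpath c + 1

mutual
/-- the number of edges on the path from the root to the rightmost leaf -/
def rpath : PTree → ℕ
  | .node _ [] => 0
  | .node _ (c :: cs) => rpathAux c cs + 1
termination_by t => sizeOf t
def rpathAux : PTree → List PTree → ℕ
  | c, [] => rpath c
  | _, c' :: cs => rpathAux c' cs
termination_by c cs => sizeOf c + sizeOf cs
end

/-- the number of nodes with label 1, other than the root, on the path from
the root to the leftmost leaf -/
def lsub : PTree → ℕ
  | node _ [] => 0
  | node _ (c :: _) => lsub c + (if c.label = 1 then 1 else 0)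

mutual
/-- the number of nodes with label 1, other than the root, on the path from
the root to the rightmost leaf -/
def rsub : PTree → ℕ
  | .node _ [] => 0
  | .node _ (c :: cs) => rsubAux c cs
termination_by t => sizeOf t
def rsubAux : PTree → List PTree → ℕ
  | c, [] => rsub c + (if c.label = 1 then 1 else 0)
  | _, c' :: cs => rsubAux c' cs
termination_by c cs => sizeOf c + sizeOf cs
end

/-- the number of internal nodes common to the left path and the right path -/
def stem : PTree → ℕ
  | node _ [] => 0
  | node _ [c] => stem c + 1
  | node _ (_ :: _ :: _) => 1

/-- `tsum u v = u ⊕ v`: the subtrees of the root are those of `u` followed by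
those of `v`, and the root label is the sum of the root labels -/
def tsum (u v : PTree) : PTree := node (u.label + v.label) (u.children ++ v.children)

/-- `lam i t = λ(i, t)`: join a new root via an edge to the old root; both the
new root and the old root get the label `i` -/
def lam (i : ℕ) (t : PTree) : PTree := node i [node i t.children]

/-- the one-edge tree (two nodes, both labeled 1) -/
def edgeT : PTree := node 1 [node 1 []]

/-- `iterEdge k = ⊕^k edgeT`, the `k`-fold sum of one-edge trees -/
def iterEdge : ℕ → PTree
  | 0 => node 0 []
  | k + 1 => tsum edgeT (iterEdge k)

/-- does the path from the root to the leftmost leaf contain a node,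
other than the leaf itself, with label 1? -/
def leftPathOne : PTree → Bool
  | node _ [] => false
  | node l (c :: _) => (l == 1) || leftPathOne c

/-- delete the leftmost leaf and decrease by 1 the labels of all nodes on the
path from the root to it -/
def delLeft : PTree → PTree
  | node l [] => node l []
  | node l (node _ [] :: cs) => node (l - 1) cs
  | node l (c :: cs) => node (l - 1) (delLeft c :: cs)

/-- iterate: if the path from the root to the leftmost leaf contains a node
(other than that leaf) with label 1, stop and report 1 plus the number of
leaves already deleted; otherwise delete the leftmost leaf (decreasing the
labels on its path) and continue -/
def stemGo : ℕ → PTree → ℕ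
  | 0, _ => 0
  | fuel + 1, t => if leftPathOne t then 1 else 1 + stemGo fuel (delLeft t)

/-- the statistic stem′ of the paper: the index of the first leaf (from the
left) whose path to the root contains a node, other than the leaf itself,
with label 1, in the iterated leaf-deletion process -/
def stemP (t : PTree) : ℕ := stemGo t.size t

/-- the mirror image: recursively reverse the order of subtrees -/
def mirror : PTree → PTree
  | node l cs => node l ((cs.attach.map (fun x => mirror x.1)).reverse)
decreasing_by have := List.sizeOf_lt_of_mem x.2; simp at this ⊢; omega

/-- the statistic stem~ : stem′ of the mirror image -/
def stemM (t : PTree) : ℕ := stemP (mirror t)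

/-- `obs u v = u ⊘ v`: identify the rightmost leaf of `u` with the root of `v`;
the identified node gets label 1 -/
def obs : PTree → PTree → PTree
  | node _ [], v => node 1 v.children
  | node l [c], v => node l [obs c v]
  | node l (c :: c' :: cs), v => node l (c :: (obs (node l (c' :: cs)) v).children)
termination_by u _ => sizeOf u
decreasing_by all_goals (simp; try omega)

/-- validity of a non-root node of a β(1,0)-tree (together with all of its
descendants): a leaf has label 1, and any other node has a positive label
that is at most the sum of its children's labels -/
inductive IsBetaSub : PTree → Prop where
  | mk (l : ℕ) (cs : List PTree)
      (hleaf : cs = [] → l = 1)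
      (hinternal : cs ≠ [] → 1 ≤ l ∧ l ≤ (cs.map label).sum)
      (hchildren : ∀ c ∈ cs, IsBetaSub c) : IsBetaSub (node l cs)

end PTree

/-- `t` is a β(1,0)-tree: the root label equals the sum of the children's
labels, and every non-root node is valid -/
def IsBeta (t : PTree) : Prop :=
  t.label = (t.children.map PTree.label).sum ∧ ∀ c ∈ t.children, PTree.IsBetaSub c

end Beta10

namespace Beta10

/-!
Reverse∘complement maps 3-1-4-2 and 2-41-3 to themselves, and reverse∘inverse maps 3-1-4-2 to
itself. Reverse∘inverse turns an occurrence of 2-41-3 into a classical occurrence of 2-4-1-3 in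
which the letters playing 2 and 3 are consecutive values, and such an occurrence always contains a
dashed 2-41-3. Finally complement∘inverse is reverse∘complement after reverse∘inverse.
-/

lemma isPermOf_of_nodup {n : ℕ} {l : List ℕ} (hnd : l.Nodup)
    (hmem : ∀ x ∈ l, 1 ≤ x ∧ x ≤ n) (hlen : l.length = n) : IsPermOf n l := by
  refine (List.subperm_of_subset hnd fun x hx => ?_).perm_of_length_le (by simp [hlen])
  have := hmem x hx
  exact List.mem_range'_1.mpr (by omega)

namespace IsPermOf

variable {n : ℕ} {l : List ℕ}

lemma length_eq (h : IsPermOf n l) : l.length = n := by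
  simpa using List.Perm.length_eq h

lemma nodup (h : IsPermOf n l) : l.Nodup :=
  h.nodup_iff.mpr List.nodup_range'

lemma mem_iff (h : IsPermOf n l) {v : ℕ} : v ∈ l ↔ 1 ≤ v ∧ v ≤ n := by
  rw [List.Perm.mem_iff h, List.mem_range'_1]
  omega

lemma getD_bounds (h : IsPermOf n l) {p : ℕ} (hp : p < n) :
    1 ≤ l.getD p 0 ∧ l.getD p 0 ≤ n := by
  rw [← h.mem_iff, List.getD_eq_getElem _ _ (h.length_eq ▸ hp)]
  exact List.getElem_mem _

lemma idxOf_lt (h : IsPermOf n l) {v : ℕ} (hv1 : 1 ≤ v) (hvn : v ≤ n) : l.idxOf v < n :=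
  h.length_eq ▸ List.idxOf_lt_length_iff.mpr (h.mem_iff.mpr ⟨hv1, hvn⟩)

lemma getD_idxOf (h : IsPermOf n l) {v : ℕ} (hv1 : 1 ≤ v) (hvn : v ≤ n) :
    l.getD (l.idxOf v) 0 = v := by
  have hlt := h.length_eq ▸ h.idxOf_lt hv1 hvn
  rw [List.getD_eq_getElem _ _ hlt, List.getElem_idxOf hlt]

end IsPermOf

section Symmetries

variable {n : ℕ} {l : List ℕ}

lemma getD_revP {p : ℕ} (hp : p < l.length) :
    (revP l).getD p 0 = l.getD (l.length - 1 - p) 0 := by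
  rw [revP, List.getD_eq_getElem _ 0 (by simpa using hp),
    List.getD_eq_getElem _ 0 (by omega), List.getElem_reverse]

lemma getD_complP {p : ℕ} (hp : p < l.length) :
    (complP n l).getD p 0 = n + 1 - l.getD p 0 := by
  rw [complP, List.getD_eq_getElem _ 0 (by simpa using hp), List.getElem_map,
    List.getD_eq_getElem _ 0 hp]

lemma getD_invP {p : ℕ} (hp : p < l.length) :
    (invP l).getD p 0 = l.idxOf (p + 1) + 1 := by
  rw [invP, List.getD_eq_getElem _ 0 (by simpa using hp), List.getElem_map,
    List.getElem_range', one_mul, Nat.add_comm 1 p]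

lemma getD_revP_complP (hl : l.length = n) {p : ℕ} (hp : p < n) :
    (revP (complP n l)).getD p 0 = n + 1 - l.getD (n - 1 - p) 0 := by
  rw [getD_revP (by simpa [complP, hl] using hp), getD_complP (by simp [complP]; omega)]
  simp [complP, hl]

lemma getD_revP_invP (hl : l.length = n) {p : ℕ} (hp : p < n) :
    (revP (invP l)).getD p 0 = l.idxOf (n - p) + 1 := by
  rw [getD_revP (by simpa [invP, hl] using hp), getD_invP (by simp [invP]; omega)]
  simp only [invP, List.length_map, List.length_range', hl]
  congr 2
  omega

lemma revP_complP_revP (l : List ℕ) : revP (complP n (revP l)) = complP n l := by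
  simp [revP, complP, List.map_reverse]

lemma isPermOf_revP (h : IsPermOf n l) : IsPermOf n (revP l) :=
  (List.reverse_perm l).trans h

lemma isPermOf_complP (h : IsPermOf n l) : IsPermOf n (complP n l) := by
  refine isPermOf_of_nodup (h.nodup.map_on fun x hx y hy hxy => ?_) (fun x hx => ?_)
    (by simp [complP, h.length_eq])
  · have := h.mem_iff.mp hx
    have := h.mem_iff.mp hy
    omega
  · obtain ⟨a, ha, rfl⟩ := List.mem_map.mp hx
    have := h.mem_iff.mp ha
    omega

lemma isPermOf_invP (h : IsPermOf n l) : IsPermOf n (invP l) := by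
  rw [invP, h.length_eq]
  refine isPermOf_of_nodup ((List.nodup_range').map_on fun x hx y hy hxy => ?_) (fun x hx => ?_)
    (by simp)
  · rw [List.mem_range'_1] at hx hy
    rw [← h.getD_idxOf hx.1 (by omega), ← h.getD_idxOf hy.1 (by omega), Nat.succ_inj.mp hxy]
  · obtain ⟨v, hv, rfl⟩ := List.mem_map.mp hx
    rw [List.mem_range'_1] at hv
    have := h.idxOf_lt hv.1 (by omega)
    omega

end Symmetries

/-- Since the letters playing 2 and 3 are consecutive values, every letter between the 4 and
the 1 lies below the 2 or above the 3; the first one below the 2 forms a dashed 41 with its left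
neighbour. -/
lemma pat2413_of_classical_consecutive {l : List ℕ} (hnd : l.Nodup) {q₁ q₂ q₃ q₄ : ℕ}
    (h₁₂ : q₁ < q₂) (h₂₃ : q₂ < q₃) (h₃₄ : q₃ < q₄) (h₄ : q₄ < l.length)
    (h₃₁ : l.getD q₃ 0 < l.getD q₁ 0) (h₄₁ : l.getD q₄ 0 = l.getD q₁ 0 + 1)
    (h₄₂ : l.getD q₄ 0 < l.getD q₂ 0) : pat2413 l := by
  obtain ⟨d, hd⟩ : ∃ d, q₃ = q₂ + 1 + d := ⟨q₃ - q₂ - 1, by omega⟩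
  induction d generalizing q₂ with
  | zero =>
    obtain rfl : q₃ = q₂ + 1 := hd
    exact ⟨q₁, q₂, q₄, h₁₂, by omega, h₄, h₃₁, by omega, h₄₂⟩
  | succ d ih =>
    have hne : ∀ q < l.length, q ≠ q₂ + 1 → l.getD (q₂ + 1) 0 ≠ l.getD q 0 := by
      intro q hq hq₂
      rw [List.getD_eq_getElem _ 0 (by omega), List.getD_eq_getElem _ 0 hq,
        Ne, hnd.getElem_inj_iff]
      omega
    have := hne q₁ (by omega) (by omega)
    have := hne q₄ h₄ (by omega)
    by_cases hdesc : l.getD (q₂ + 1) 0 < l.getD q₁ 0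
    · exact ⟨q₁, q₂, q₄, h₁₂, by omega, h₄, hdesc, by omega, h₄₂⟩
    · exact ih (q₂ := q₂ + 1) (by omega) (by omega) (by omega) (by omega)

section Transfer

variable {n : ℕ} {l : List ℕ}

lemma pat3142_of_pat3142_revP_complP (hl : IsPermOf n l)
    (h : pat3142 (revP (complP n l))) : pat3142 l := by
  obtain ⟨i, j, k, m, hij, hjk, hkm, hm, hjm, hmi, hik⟩ := h
  rw [(isPermOf_revP (isPermOf_complP hl)).length_eq] at hm
  have hlen := hl.length_eq
  have e := fun p (hp : p < n) => getD_revP_complP hlen hp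
  rw [e j (by omega), e m (by omega)] at hjm
  rw [e m (by omega), e i (by omega)] at hmi
  rw [e i (by omega), e k (by omega)] at hik
  have := hl.getD_bounds (p := n - 1 - i) (by omega)
  have := hl.getD_bounds (p := n - 1 - j) (by omega)
  have := hl.getD_bounds (p := n - 1 - k) (by omega)
  have := hl.getD_bounds (p := n - 1 - m) (by omega)
  exact ⟨n - 1 - m, n - 1 - k, n - 1 - j, n - 1 - i, by omega, by omega, by omega,
    by omega, by omega, by omega, by omega⟩

lemma pat2413_of_pat2413_revP_complP (hl : IsPermOf n l)
    (h : pat2413 (revP (complP n l))) : pat2413 l := by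
  obtain ⟨i, j, k, hij, hjk, hk, hji, hik, hkj⟩ := h
  rw [(isPermOf_revP (isPermOf_complP hl)).length_eq] at hk
  have hlen := hl.length_eq
  have e := fun p (hp : p < n) => getD_revP_complP hlen hp
  rw [e (j + 1) (by omega), e i (by omega)] at hji
  rw [e i (by omega), e k (by omega)] at hik
  rw [e k (by omega), e j (by omega)] at hkj
  have := hl.getD_bounds (p := n - 1 - i) (by omega)
  have := hl.getD_bounds (p := n - 1 - j) (by omega)
  have := hl.getD_bounds (p := n - 1 - (j + 1)) (by omega)
  have := hl.getD_bounds (p := n - 1 - k) (by omega)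
  refine ⟨n - 1 - k, n - 1 - (j + 1), n - 1 - i, by omega, by omega, by omega, ?_,
    by omega, by omega⟩
  rw [show n - 1 - (j + 1) + 1 = n - 1 - j by omega]
  omega

lemma pat3142_of_pat3142_revP_invP (hl : IsPermOf n l)
    (h : pat3142 (revP (invP l))) : pat3142 l := by
  obtain ⟨i, j, k, m, hij, hjk, hkm, hm, hjm, hmi, hik⟩ := h
  rw [(isPermOf_revP (isPermOf_invP hl)).length_eq] at hm
  have hlen := hl.length_eq
  have e := fun p (hp : p < n) => getD_revP_invP hlen hp
  rw [e j (by omega), e m (by omega)] at hjm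
  rw [e m (by omega), e i (by omega)] at hmi
  rw [e i (by omega), e k (by omega)] at hik
  have := hl.getD_idxOf (v := n - i) (by omega) (by omega)
  have := hl.getD_idxOf (v := n - j) (by omega) (by omega)
  have := hl.getD_idxOf (v := n - k) (by omega) (by omega)
  have := hl.getD_idxOf (v := n - m) (by omega) (by omega)
  have := hl.idxOf_lt (v := n - k) (by omega) (by omega)
  exact ⟨l.idxOf (n - j), l.idxOf (n - m), l.idxOf (n - i), l.idxOf (n - k),
    by omega, by omega, by omega, by omega, by omega, by omega, by omega⟩

lemma pat2413_of_pat2413_revP_invP (hl : IsPermOf n l)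
    (h : pat2413 (revP (invP l))) : pat2413 l := by
  obtain ⟨i, j, k, hij, hjk, hk, hji, hik, hkj⟩ := h
  rw [(isPermOf_revP (isPermOf_invP hl)).length_eq] at hk
  have hlen := hl.length_eq
  have e := fun p (hp : p < n) => getD_revP_invP hlen hp
  rw [e (j + 1) (by omega), e i (by omega)] at hji
  rw [e i (by omega), e k (by omega)] at hik
  rw [e k (by omega), e j (by omega)] at hkj
  have := hl.getD_idxOf (v := n - i) (by omega) (by omega)
  have := hl.getD_idxOf (v := n - j) (by omega) (by omega)
  have := hl.getD_idxOf (v := n - (j + 1)) (by omega) (by omega)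
  have := hl.getD_idxOf (v := n - k) (by omega) (by omega)
  have h₄ := hl.idxOf_lt (v := n - j) (by omega) (by omega)
  exact pat2413_of_classical_consecutive (q₁ := l.idxOf (n - (j + 1))) (q₂ := l.idxOf (n - i))
    (q₃ := l.idxOf (n - k)) (q₄ := l.idxOf (n - j)) hl.nodup
    (by omega) (by omega) (by omega) (by omega) (by omega) (by omega) (by omega)

end Transfer

lemma Avoider.revP_complP {n : ℕ} {l : List ℕ} (h : Avoider n l) :
    Avoider n (revP (complP n l)) :=
  ⟨isPermOf_revP (isPermOf_complP h.1), fun h' => h.2.1 (pat3142_of_pat3142_revP_complP h.1 h'),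
    fun h' => h.2.2 (pat2413_of_pat2413_revP_complP h.1 h')⟩

lemma Avoider.revP_invP {n : ℕ} {l : List ℕ} (h : Avoider n l) :
    Avoider n (revP (invP l)) :=
  ⟨isPermOf_revP (isPermOf_invP h.1), fun h' => h.2.1 (pat3142_of_pat3142_revP_invP h.1 h'),
    fun h' => h.2.2 (pat2413_of_pat2413_revP_invP h.1 h')⟩

/-- The set of avoiders of `{1,…,n}` is closed under the
symmetries reverse∘complement, reverse∘inverse and complement∘inverse. -/
theorem statement_18 (n : ℕ) (l : List ℕ) (h : Avoider n l) :
    Avoider n (revP (complP n l)) ∧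
    Avoider n (revP (invP l)) ∧
    Avoider n (complP n (invP l)) := by
  refine ⟨h.revP_complP, h.revP_invP, ?_⟩
  simpa only [revP_complP_revP] using h.revP_invP.revP_complP

end Beta10
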